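/- arXiv:2507.17556 — 4 statements merged into one kernel-verified Lean document; each statement's English description precedes it below -/
import Mathlib

section
/- Let x ∈ ℝⁿ and h ∈ [0,1], and let G ⊆ N = {1,…,d} be a nonempty subset with |G| ≥ ⌈(1−h)·d⌉. Then ‖∇f(x) − ∇f_G(x)‖ ≤ 2h · max_{i ∈ N} ‖∇f_i(x)‖. -/
open scoped RealInnerProductSpace

/-- The spectral (ℓ²-operator) norm of a real matrix. -/
noncomputable def specNorm {n : ℕ} (A : Matrix (Fin n) (Fin n) ℝ) : ℝ :=
  ‖Matrix.toEuclideanCLM (𝕜 := ℝ) A‖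

/-- The smallest eigenvalue of a (Hermitian) real matrix. -/
noncomputable def lambdaMin {n : ℕ} (A : Matrix (Fin n) (Fin n) ℝ) : ℝ :=
  if h : A.IsHermitian then ⨅ i, h.eigenvalues i else 0

/-- The Hessian matrix of `f` at `x`, given by second directional derivatives. -/
noncomputable def hessian {n : ℕ} (f : EuclideanSpace ℝ (Fin n) → ℝ)
    (x : EuclideanSpace ℝ (Fin n)) : Matrix (Fin n) (Fin n) ℝ :=
  fun i j => iteratedFDeriv ℝ 2 f x ![EuclideanSpace.single i 1, EuclideanSpace.single j 1]

/-! Both gradients are linear in the `∇ f_i(x)`, so the claim is about averages of vectors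
`g_i` with `‖g_i‖ ≤ M`. If `a` is the average over `G ⊆ s`, then `avg_s g - a` is
`(#s)⁻¹` times the sum of the `#s - #G` deviations `g_i - a`, `i ∉ G`, each of norm at most
`2M`; and `1 - #G / d ≤ h` is exactly the cardinality hypothesis. -/

open Finset

theorem gradient_const_mul_sum {ι F : Type*} [NormedAddCommGroup F] [InnerProductSpace ℝ F]
    [CompleteSpace F] {f : ι → F → ℝ} {x : F} (s : Finset ι)
    (hf : ∀ i ∈ s, DifferentiableAt ℝ (f i) x) (c : ℝ) :
    gradient (fun y => c * ∑ i ∈ s, f i y) x = c • ∑ i ∈ s, gradient (f i) x := by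
  have hsum : HasGradientAt (fun y => ∑ i ∈ s, f i y) (∑ i ∈ s, gradient (f i) x) x := by
    rw [hasGradientAt_iff_hasFDerivAt, map_sum]
    exact HasFDerivAt.fun_sum fun i hi => (hf i hi).hasGradientAt.hasFDerivAt
  refine HasGradientAt.gradient ?_
  rw [hasGradientAt_iff_hasFDerivAt, map_smul]
  exact hsum.hasFDerivAt.const_mul c

theorem norm_inv_card_smul_sum_le {ι E : Type*} [SeminormedAddCommGroup E] [NormedSpace ℝ E]
    (s : Finset ι) (g : ι → E) {M : ℝ} (hM0 : 0 ≤ M) (hM : ∀ i ∈ s, ‖g i‖ ≤ M) :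
    ‖(#s : ℝ)⁻¹ • ∑ i ∈ s, g i‖ ≤ M := by
  rcases s.eq_empty_or_nonempty with rfl | hs
  · simpa using hM0
  have hcard : (0 : ℝ) < #s := by exact_mod_cast hs.card_pos
  calc ‖(#s : ℝ)⁻¹ • ∑ i ∈ s, g i‖ ≤ (#s : ℝ)⁻¹ * (#s * M) := by
        rw [norm_smul, Real.norm_of_nonneg (by positivity)]
        gcongr
        simpa using norm_sum_le_of_le s hM
    _ = M := by field_simp

theorem card_smul_inv_card_smul_sum {ι E : Type*} [AddCommGroup E] [Module ℝ E]
    (s : Finset ι) (g : ι → E) :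
    (#s : ℝ) • (#s : ℝ)⁻¹ • ∑ i ∈ s, g i = ∑ i ∈ s, g i := by
  rcases s.eq_empty_or_nonempty with rfl | hs
  · simp
  exact smul_inv_smul₀ (by exact_mod_cast hs.card_pos.ne') _

theorem inv_card_smul_sum_sub_inv_card_smul_sum_of_subset {ι E : Type*} [DecidableEq ι] [AddCommGroup E]
    [Module ℝ E] {s t : Finset ι} (hts : t ⊆ s) (hs : s.Nonempty) (g : ι → E) :
    (#s : ℝ)⁻¹ • ∑ i ∈ s, g i - (#t : ℝ)⁻¹ • ∑ i ∈ t, g i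
      = (#s : ℝ)⁻¹ • ∑ i ∈ s \ t, (g i - (#t : ℝ)⁻¹ • ∑ j ∈ t, g j) := by
  set a := (#t : ℝ)⁻¹ • ∑ j ∈ t, g j
  have hcard : (#s : ℝ) ≠ 0 := by exact_mod_cast hs.card_pos.ne'
  have hdiff : ∑ i ∈ s \ t, (g i - a) = ∑ i ∈ s, g i - (#s : ℝ) • a := by
    rw [sum_sub_distrib, sum_const, card_sdiff_of_subset hts, ← Nat.cast_smul_eq_nsmul ℝ,
      Nat.cast_sub (card_le_card hts), sub_smul, card_smul_inv_card_smul_sum, ← sum_sdiff hts]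
    abel
  rw [hdiff, smul_sub, inv_smul_smul₀ hcard]

theorem norm_inv_card_smul_sum_sub_inv_card_smul_sum_le {ι E : Type*} [SeminormedAddCommGroup E]
    [NormedSpace ℝ E] {s t : Finset ι} (hts : t ⊆ s) (g : ι → E) {M : ℝ} (hM0 : 0 ≤ M)
    (hM : ∀ i ∈ s, ‖g i‖ ≤ M) :
    ‖(#s : ℝ)⁻¹ • ∑ i ∈ s, g i - (#t : ℝ)⁻¹ • ∑ i ∈ t, g i‖ ≤ 2 * (1 - #t / #s) * M := by
  classical
  rcases s.eq_empty_or_nonempty with rfl | hs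
  · simp [subset_empty.mp hts, hM0]
  set a := (#t : ℝ)⁻¹ • ∑ j ∈ t, g j
  have hcard : (0 : ℝ) < #s := by exact_mod_cast hs.card_pos
  have ha : ‖a‖ ≤ M := norm_inv_card_smul_sum_le t g hM0 fun i hi => hM i (hts hi)
  have hdev : ∀ i ∈ s \ t, ‖g i - a‖ ≤ 2 * M := fun i hi =>
    (norm_sub_le _ _).trans (by linarith [hM i (mem_sdiff.mp hi).1])
  calc ‖(#s : ℝ)⁻¹ • ∑ i ∈ s, g i - a‖
      = (#s : ℝ)⁻¹ * ‖∑ i ∈ s \ t, (g i - a)‖ := by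
        rw [inv_card_smul_sum_sub_inv_card_smul_sum_of_subset hts hs, norm_smul,
          Real.norm_of_nonneg (by positivity)]
    _ ≤ (#s : ℝ)⁻¹ * (#(s \ t) * (2 * M)) := by
        gcongr
        simpa using norm_sum_le_of_le _ hdev
    _ = 2 * (1 - #t / #s) * M := by
        rw [card_sdiff_of_subset hts, Nat.cast_sub (card_le_card hts)]
        field_simp

theorem stmt_0_general {n d : ℕ} [NeZero d]
    (f : Fin d → EuclideanSpace ℝ (Fin n) → ℝ)
    (hf : ∀ i, ContDiff ℝ 2 (f i))
    (x : EuclideanSpace ℝ (Fin n)) (h : ℝ)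
    (G : Finset (Fin d))
    (hcard : ⌈(1 - h) * (d : ℝ)⌉₊ ≤ G.card) :
    ‖gradient (fun y => (d : ℝ)⁻¹ * ∑ i, f i y) x
        - gradient (fun y => ((G.card : ℝ))⁻¹ * ∑ i ∈ G, f i y) x‖
      ≤ 2 * h * (Finset.univ.sup' Finset.univ_nonempty fun i => ‖gradient (f i) x‖) := by
  set M := univ.sup' univ_nonempty fun i => ‖gradient (f i) x‖
  have hM : ∀ i ∈ univ, ‖gradient (f i) x‖ ≤ M := fun i hi =>
    le_sup' (fun i => ‖gradient (f i) x‖) hi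
  have hM0 : 0 ≤ M := (norm_nonneg _).trans (hM 0 (mem_univ 0))
  have hdiff : ∀ i, DifferentiableAt ℝ (f i) x := fun i =>
    ((hf i).differentiable two_ne_zero).differentiableAt
  have hfrac : 1 - #G / d ≤ h := by
    rw [sub_le_comm, le_div_iff₀ (Nat.cast_pos.mpr (NeZero.pos d))]
    exact Nat.ceil_le.mp hcard
  have hbound := norm_inv_card_smul_sum_sub_inv_card_smul_sum_le (subset_univ G)
    (fun i => gradient (f i) x) hM0 hM
  rw [card_univ, Fintype.card_fin] at hbound
  rw [gradient_const_mul_sum _ fun i _ => hdiff i, gradient_const_mul_sum _ fun i _ => hdiff i]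
  calc _ ≤ 2 * (1 - #G / d) * M := hbound
    _ ≤ 2 * h * M := by gcongr

theorem stmt_0 {n d : ℕ} (hn : 1 ≤ n) [NeZero d]
    (f : Fin d → EuclideanSpace ℝ (Fin n) → ℝ)
    (hf : ∀ i, ContDiff ℝ 2 (f i))
    (x : EuclideanSpace ℝ (Fin n)) (h : ℝ) (hh0 : 0 ≤ h) (hh1 : h ≤ 1)
    (G : Finset (Fin d)) (hG : G.Nonempty)
    (hcard : ⌈(1 - h) * (d : ℝ)⌉₊ ≤ G.card) :
    ‖gradient (fun y => (d : ℝ)⁻¹ * ∑ i, f i y) x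
        - gradient (fun y => ((G.card : ℝ))⁻¹ * ∑ i ∈ G, f i y) x‖
      ≤ 2 * h * (Finset.univ.sup' Finset.univ_nonempty fun i => ‖gradient (f i) x‖) :=
  stmt_0_general f hf x h G hcard
end

section
/- Let x ∈ ℝⁿ and h ∈ [0,1], and let H ⊆ N = {1,…,d} be a nonempty subset with |H| ≥ ⌈(1−h)·d⌉. Then ‖∇²f(x) − ∇²f_H(x)‖ ≤ 2h · max_{i ∈ N} ‖∇²f_i(x)‖, where ‖·‖ is the spectral norm on symmetric matrices. -/
open scoped RealInnerProductSpace

/-!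
Write `A i` for the Hessian of `f i` at `x` and `M` for the largest of their norms. Splitting the
full average as `(1/d) ∑_{N∖H} A i + (1/d) ∑_H A i`, the difference of the two averages is
`(1/d) ∑_{N∖H} A i - (1/|H| - 1/d) ∑_H A i`, and each of the two terms has norm at most
`(1 - |H|/d) M`. The hypothesis on `|H|` gives `1 - |H|/d ≤ h`.
-/

open Finset

theorem norm_inv_card_smul_sum_sub_le {ι E : Type*} [DecidableEq ι] [SeminormedAddCommGroup E]
    [NormedSpace ℝ E] {s t : Finset ι} (hs : s.Nonempty) (hst : s ⊆ t) (A : ι → E) {M : ℝ}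
    (hM : ∀ i ∈ t, ‖A i‖ ≤ M) :
    ‖(#t : ℝ)⁻¹ • ∑ i ∈ t, A i - (#s : ℝ)⁻¹ • ∑ i ∈ s, A i‖ ≤ 2 * (1 - #s / #t) * M := by
  have hs0 : (0 : ℝ) < #s := by exact_mod_cast hs.card_pos
  have hst' : (#s : ℝ) ≤ #t := by exact_mod_cast card_le_card hst
  have ht0 : (#t : ℝ) ≠ 0 := by linarith
  have norm_sum_le_card_mul (u : Finset ι) (hu : u ⊆ t) : ‖∑ i ∈ u, A i‖ ≤ #u * M := by
    simpa using norm_sum_le_of_le u fun i hi => hM i (hu hi)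
  have split : (#t : ℝ)⁻¹ • ∑ i ∈ t, A i - (#s : ℝ)⁻¹ • ∑ i ∈ s, A i
      = (#t : ℝ)⁻¹ • ∑ i ∈ t \ s, A i - ((#s : ℝ)⁻¹ - (#t : ℝ)⁻¹) • ∑ i ∈ s, A i := by
    rw [← sum_sdiff hst, smul_add, sub_smul]
    abel
  have hcoef : 0 ≤ (#s : ℝ)⁻¹ - (#t : ℝ)⁻¹ := sub_nonneg.2 (inv_anti₀ hs0 hst')
  have hcard_sdiff : (#(t \ s) : ℝ) = #t - #s := by
    rw [card_sdiff_of_subset hst, Nat.cast_sub (card_le_card hst)]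
  rw [split]
  calc _ ≤ ‖(#t : ℝ)⁻¹ • ∑ i ∈ t \ s, A i‖ + ‖((#s : ℝ)⁻¹ - (#t : ℝ)⁻¹) • ∑ i ∈ s, A i‖ :=
        norm_sub_le _ _
    _ ≤ (#t : ℝ)⁻¹ * (#(t \ s) * M) + ((#s : ℝ)⁻¹ - (#t : ℝ)⁻¹) * (#s * M) := by
        rw [norm_smul, norm_smul, Real.norm_of_nonneg (by positivity),
          Real.norm_of_nonneg hcoef]
        gcongr
        exacts [norm_sum_le_card_mul _ sdiff_subset, norm_sum_le_card_mul _ hst]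
    _ = 2 * (1 - #s / #t) * M := by
        rw [hcard_sdiff]
        field_simp
        ring

theorem hessian_const_mul_sum {n : ℕ} {ι : Type*} (s : Finset ι)
    (f : ι → EuclideanSpace ℝ (Fin n) → ℝ) (x : EuclideanSpace ℝ (Fin n))
    (hf : ∀ i ∈ s, ContDiffAt ℝ 2 (f i) x) (c : ℝ) :
    hessian (fun y => c * ∑ i ∈ s, f i y) x = c • ∑ i ∈ s, hessian (f i) x := by
  ext j k
  have hsum : ContDiffAt ℝ 2 (∑ i ∈ s, f i) x := by
    simpa only [← Finset.sum_apply] using ContDiffAt.sum hf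
  simp only [hessian, ← smul_eq_mul (a := c), ← Finset.sum_apply (s := s) (g := f)]
  rw [iteratedFDeriv_const_smul_apply' hsum, iteratedFDeriv_sum_apply hf]
  simp [hessian, Matrix.sum_apply]

theorem stmt_1_general {n d : ℕ} [NeZero d]
    (f : Fin d → EuclideanSpace ℝ (Fin n) → ℝ)
    (hf : ∀ i, ContDiff ℝ 2 (f i))
    (x : EuclideanSpace ℝ (Fin n)) (h : ℝ)
    (H : Finset (Fin d)) (hH : H.Nonempty)
    (hcard : ⌈(1 - h) * (d : ℝ)⌉₊ ≤ H.card) :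
    specNorm (hessian (fun y => (d : ℝ)⁻¹ * ∑ i, f i y) x
        - hessian (fun y => ((H.card : ℝ))⁻¹ * ∑ i ∈ H, f i y) x)
      ≤ 2 * h * (Finset.univ.sup' Finset.univ_nonempty fun i => specNorm (hessian (f i) x)) := by
  set M := Finset.univ.sup' Finset.univ_nonempty fun i => specNorm (hessian (f i) x)
  have hM : ∀ i ∈ univ, specNorm (hessian (f i) x) ≤ M := fun i hi =>
    le_sup' (fun i => specNorm (hessian (f i) x)) hi
  have hM0 : 0 ≤ M := (norm_nonneg _).trans (hM 0 (mem_univ 0))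
  have hd : (0 : ℝ) < d := by exact_mod_cast Nat.pos_of_neZero d
  have hfrac : 1 - #H / d ≤ h := by
    have : (1 - h) * d ≤ #H := (Nat.le_ceil _).trans (by exact_mod_cast hcard)
    rw [sub_le_comm, le_div_iff₀ hd]
    linarith
  have key := norm_inv_card_smul_sum_sub_le hH (subset_univ H)
    (fun i => Matrix.toEuclideanCLM (𝕜 := ℝ) (hessian (f i) x)) hM
  rw [card_univ, Fintype.card_fin] at key
  rw [hessian_const_mul_sum _ _ _ fun i _ => (hf i).contDiffAt,
    hessian_const_mul_sum _ _ _ fun i _ => (hf i).contDiffAt]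
  calc specNorm _ ≤ 2 * (1 - #H / d) * M := by
        simpa only [specNorm, map_sub, map_smul, map_sum] using key
    _ ≤ 2 * h * M := by gcongr

theorem stmt_1 {n d : ℕ} (hn : 1 ≤ n) [NeZero d]
    (f : Fin d → EuclideanSpace ℝ (Fin n) → ℝ)
    (hf : ∀ i, ContDiff ℝ 2 (f i))
    (x : EuclideanSpace ℝ (Fin n)) (h : ℝ) (hh0 : 0 ≤ h) (hh1 : h ≤ 1)
    (H : Finset (Fin d)) (hH : H.Nonempty)
    (hcard : ⌈(1 - h) * (d : ℝ)⌉₊ ≤ H.card) :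
    specNorm (hessian (fun y => (d : ℝ)⁻¹ * ∑ i, f i y) x
        - hessian (fun y => ((H.card : ℝ))⁻¹ * ∑ i ∈ H, f i y) x)
      ≤ 2 * h * (Finset.univ.sup' Finset.univ_nonempty fun i => specNorm (hessian (f i) x)) :=
  stmt_1_general f hf x h H hH hcard
end

section
/- (First-order sufficient condition for a successful iteration.) Let f : ℝⁿ → ℝ be differentiable with L_g-Lipschitz continuous gradient, L_g > 0. Let α ∈ (0,1), D_0 ≥ 0, 0 < Δ ≤ Δ_max, x, g, u ∈ ℝⁿ, and let B be a symmetric n×n matrix. Assume: (i) ‖g − ∇f(x)‖ ≤ 2 L_g D_0 (Δ/Δ_max); (ii) ‖B‖ ≤ L_g (spectral norm); (iii) ‖u‖ ≤ Δ; (iv) with m(v) := f(x) + ⟨g, v⟩ + ½⟨B v, v⟩, the decrease m(0) − m(u) ≥ ½ ‖g‖ min{Δ, ‖g‖/L_g} holds; and (v) Δ ≤ (1−α)‖g‖ / (2 [1 + 2 D_0/Δ_max] L_g). Then f(x) − f(x+u) ≥ α (m(0) − m(u)); that is, the trust-region ratio ρ = (f(x) − f(x+u))/(m(0) − m(u)) satisfies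 ρ ≥ α. -/
/-!
By the descent lemma `f (x + u) ≤ f x + ⟪∇f x, u⟫ + L_g/2 ‖u‖²`, the actual reduction
`f x - f (x + u)` falls short of the model decrease `m 0 - m u` by at most
`‖g - ∇f x‖ ‖u‖ + (L_g + ‖B‖)/2 ‖u‖² ≤ (1 + 2 D₀/Δ_max) L_g Δ²`.
Condition (v) bounds this by `(1 - α) ‖g‖ Δ / 2`; it also gives `Δ ≤ ‖g‖ / L_g`, so the
Cauchy decrease (iv) reads `m 0 - m u ≥ ‖g‖ Δ / 2` and the shortfall is at most
`(1 - α) (m 0 - m u)`.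
-/

open scoped RealInnerProductSpace

open Set
open scoped Gradient

section

variable {E : Type*} [NormedAddCommGroup E] [InnerProductSpace ℝ E] [CompleteSpace E]
  {f : E → ℝ} {L : ℝ}

lemma hasDerivAt_comp_add_smul (hf : Differentiable ℝ f) (x u : E) (t : ℝ) :
    HasDerivAt (fun s : ℝ => f (x + s • u)) ⟪∇ f (x + t • u), u⟫ t := by
  have hline : HasDerivAt (fun s : ℝ => x + s • u) u t := by
    simpa using ((hasDerivAt_id t).smul_const u).const_add x
  simpa [Function.comp_def] using
    (hf (x + t • u)).hasGradientAt.hasFDerivAt.comp_hasDerivAt t hline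

lemma inner_gradient_add_smul_le (hlip : ∀ y z, ‖∇ f y - ∇ f z‖ ≤ L * ‖y - z‖)
    (x u : E) {t : ℝ} (ht : 0 ≤ t) :
    ⟪∇ f (x + t • u), u⟫ ≤ ⟪∇ f x, u⟫ + t * L * ‖u‖ ^ 2 := by
  have h : ⟪∇ f (x + t • u) - ∇ f x, u⟫ ≤ t * L * ‖u‖ ^ 2 :=
    calc ⟪∇ f (x + t • u) - ∇ f x, u⟫
        ≤ ‖∇ f (x + t • u) - ∇ f x‖ * ‖u‖ := real_inner_le_norm _ _
      _ ≤ L * ‖x + t • u - x‖ * ‖u‖ := by gcongr; exact hlip _ _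
      _ = t * L * ‖u‖ ^ 2 := by
        rw [add_sub_cancel_left, norm_smul, Real.norm_of_nonneg ht]; ring
  rw [inner_sub_left] at h
  linarith

lemma image_add_le_of_lipschitz_gradient (hf : Differentiable ℝ f)
    (hlip : ∀ y z, ‖∇ f y - ∇ f z‖ ≤ L * ‖y - z‖) (x u : E) :
    f (x + u) ≤ f x + ⟪∇ f x, u⟫ + L / 2 * ‖u‖ ^ 2 := by
  have hφ := hasDerivAt_comp_add_smul hf x u
  have hbound : ∀ t : ℝ, HasDerivAt (fun s => f x + s * ⟪∇ f x, u⟫ + L / 2 * s ^ 2 * ‖u‖ ^ 2)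
      (⟪∇ f x, u⟫ + t * L * ‖u‖ ^ 2) t := fun t => by
    refine ((((hasDerivAt_id t).mul_const ⟪∇ f x, u⟫).const_add (f x)).add
      (((hasDerivAt_pow 2 t).const_mul (L / 2)).mul_const (‖u‖ ^ 2))).congr_deriv ?_
    push_cast
    ring
  have key := image_le_of_deriv_right_le_deriv_boundary (a := 0) (b := 1)
    (fun t _ => (hφ t).continuousAt.continuousWithinAt) (fun t _ => (hφ t).hasDerivWithinAt)
    (by simp) (fun t _ => (hbound t).continuousAt.continuousWithinAt)
    (fun t _ => (hbound t).hasDerivWithinAt) (fun t ht => inner_gradient_add_smul_le hlip x u ht.1)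
    (right_mem_Icc.2 zero_le_one)
  simpa using key

lemma image_add_sub_quadratic_model_le (hf : Differentiable ℝ f)
    (hlip : ∀ y z, ‖∇ f y - ∇ f z‖ ≤ L * ‖y - z‖) (x g u : E) (B : E →L[ℝ] E) :
    f (x + u) - (f x + ⟪g, u⟫ + 1 / 2 * ⟪B u, u⟫)
      ≤ ‖g - ∇ f x‖ * ‖u‖ + (L + ‖B‖) / 2 * ‖u‖ ^ 2 := by
  have hdescent := image_add_le_of_lipschitz_gradient hf hlip x u
  have hgrad : ⟪∇ f x - g, u⟫ ≤ ‖g - ∇ f x‖ * ‖u‖ := by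
    rw [← norm_neg, neg_sub]; exact real_inner_le_norm _ _
  have hquad : -⟪B u, u⟫ ≤ ‖B‖ * ‖u‖ ^ 2 :=
    calc -⟪B u, u⟫ ≤ ‖B u‖ * ‖u‖ := (neg_le_abs _).trans (abs_real_inner_le_norm _ _)
      _ ≤ ‖B‖ * ‖u‖ * ‖u‖ := by gcongr; exact B.le_opNorm u
      _ = ‖B‖ * ‖u‖ ^ 2 := by ring
  rw [inner_sub_left] at hgrad
  linarith

end

theorem stmt_7_general {n : ℕ} (f : EuclideanSpace ℝ (Fin n) → ℝ)
    (Lg : ℝ) (hLg : 0 < Lg)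
    (hdiff : Differentiable ℝ f)
    (hlip : ∀ y z : EuclideanSpace ℝ (Fin n),
      ‖gradient f y - gradient f z‖ ≤ Lg * ‖y - z‖)
    (α D0 Δ Δmax : ℝ) (hα0 : 0 < α) (hα1 : α < 1) (hD0 : 0 ≤ D0)
    (hΔ : 0 < Δ) (hΔmax : Δ ≤ Δmax)
    (x g u : EuclideanSpace ℝ (Fin n))
    (B : Matrix (Fin n) (Fin n) ℝ)
    (m : EuclideanSpace ℝ (Fin n) → ℝ)
    (hm : ∀ v, m v = f x + ⟪g, v⟫
      + (1 / 2) * ⟪(Matrix.toEuclideanCLM (𝕜 := ℝ) B) v, v⟫)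
    (h1 : ‖g - gradient f x‖ ≤ 2 * Lg * D0 * (Δ / Δmax))
    (h2 : specNorm B ≤ Lg)
    (h3 : ‖u‖ ≤ Δ)
    (h4 : m 0 - m u ≥ 1 / 2 * ‖g‖ * min Δ (‖g‖ / Lg))
    (h5 : Δ ≤ (1 - α) * ‖g‖ / (2 * (1 + 2 * (D0 / Δmax)) * Lg)) :
    f x - f (x + u) ≥ α * (m 0 - m u) := by
  set r := D0 / Δmax
  have hr : 0 ≤ r := div_nonneg hD0 (hΔ.le.trans hΔmax)
  have hΔg : 2 * (1 + 2 * r) * Lg * Δ ≤ (1 - α) * ‖g‖ := by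
    rwa [le_div_iff₀ (by positivity), mul_comm] at h5
  have hmin : min Δ (‖g‖ / Lg) = Δ := by
    refine min_eq_left ((le_div_iff₀ hLg).2 ?_)
    nlinarith [mul_nonneg hα0.le (norm_nonneg g), mul_nonneg hr (mul_pos hLg hΔ).le]
  have hgrad : ‖g - gradient f x‖ * ‖u‖ ≤ 2 * r * Lg * Δ * Δ := by
    have : ‖g - gradient f x‖ ≤ 2 * r * Lg * Δ := h1.trans_eq (by ring)
    gcongr
  have hquad : (Lg + specNorm B) / 2 * ‖u‖ ^ 2 ≤ Lg * Δ ^ 2 := by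
    have : (Lg + specNorm B) / 2 ≤ Lg := by linarith
    gcongr
  have hmodel : f (x + u) - m u ≤ (1 + 2 * r) * Lg * Δ ^ 2 := by
    have := image_add_sub_quadratic_model_le hdiff hlip x g u (Matrix.toEuclideanCLM (𝕜 := ℝ) B)
    rw [hm]
    unfold specNorm at hquad
    linarith
  have hmargin : (1 + 2 * r) * Lg * Δ ^ 2 ≤ (1 - α) * (m 0 - m u) := by
    rw [hmin] at h4
    calc (1 + 2 * r) * Lg * Δ ^ 2 = Δ / 2 * (2 * (1 + 2 * r) * Lg * Δ) := by ring
      _ ≤ Δ / 2 * ((1 - α) * ‖g‖) := by gcongr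
      _ = (1 - α) * (1 / 2 * ‖g‖ * Δ) := by ring
      _ ≤ (1 - α) * (m 0 - m u) := by gcongr
  have hm0 : m 0 = f x := by simp [hm]
  linarith

theorem stmt_7 {n : ℕ} (f : EuclideanSpace ℝ (Fin n) → ℝ)
    (Lg : ℝ) (hLg : 0 < Lg)
    (hdiff : Differentiable ℝ f)
    (hlip : ∀ y z : EuclideanSpace ℝ (Fin n),
      ‖gradient f y - gradient f z‖ ≤ Lg * ‖y - z‖)
    (α D0 Δ Δmax : ℝ) (hα0 : 0 < α) (hα1 : α < 1) (hD0 : 0 ≤ D0)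
    (hΔ : 0 < Δ) (hΔmax : Δ ≤ Δmax)
    (x g u : EuclideanSpace ℝ (Fin n))
    (B : Matrix (Fin n) (Fin n) ℝ) (hB : B.IsHermitian)
    (m : EuclideanSpace ℝ (Fin n) → ℝ)
    (hm : ∀ v, m v = f x + ⟪g, v⟫
      + (1 / 2) * ⟪(Matrix.toEuclideanCLM (𝕜 := ℝ) B) v, v⟫)
    (h1 : ‖g - gradient f x‖ ≤ 2 * Lg * D0 * (Δ / Δmax))
    (h2 : specNorm B ≤ Lg)
    (h3 : ‖u‖ ≤ Δ)
    (h4 : m 0 - m u ≥ 1 / 2 * ‖g‖ * min Δ (‖g‖ / Lg))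
    (h5 : Δ ≤ (1 - α) * ‖g‖ / (2 * (1 + 2 * (D0 / Δmax)) * Lg)) :
    f x - f (x + u) ≥ α * (m 0 - m u) :=
  stmt_7_general f Lg hLg hdiff hlip α D0 Δ Δmax hα0 hα1 hD0 hΔ hΔmax x g u B m hm h1 h2 h3 h4 h5
end

section
/- (Worst-case iteration complexity of the first-order sub-sampled trust-region method.) Let f : ℝⁿ → ℝ be differentiable with L_g-Lipschitz gradient (L_g > 0), bounded below by f_low ∈ ℝ. Let α ∈ (0,1), ε_g > 0, D_0 ≥ 0, 0 < Δ_0 ≤ Δ_max, and assume Δ_0 ≥ (1−α)ε_g / (5 [1 + 2 D_0/Δ_max] L_g). Let (x_k), (d_k), (g_k) be sequences in ℝⁿ, (Δ_k) positive reals, (B_k) symmetric n×n matrices, and define T(ε_g) := inf{k ∈ ℕ : ‖∇f(x_k)‖ ≤ ε_g}. Assume for every k < T(ε_g): (i) ‖g_k − ∇f(x_k)‖ ≤ 2 L_g D_0 (Δ_k/Δ_max); (ii) ‖g_k‖ > 4ε_g/5; (iii) ‖B_k‖ ≤ L_g; (iv) ‖d_k‖ ≤ Δ_k; (v) with m_k(v)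 := f(x_k) + ⟨g_k, v⟩ + ½⟨B_k v, v⟩, m_k(0) − m_k(d_k) ≥ ½‖g_k‖ min{Δ_k, ‖g_k‖/L_g}; and (vi) setting ρ_k := (f(x_k) − f(x_k + d_k))/(m_k(0) − m_k(d_k)): if ρ_k ≥ α then x_{k+1} = x_k + d_k and Δ_{k+1} = min{2Δ_k, Δ_max}, otherwise x_{k+1} = x_k and Δ_{k+1} = Δ_k/2. Then T(ε_g) is finite and T(ε_g) ≤ (25 [1 + 2 D_0/Δ_max] L_g (f(x_0) − f_low)) / (α(1−α)) · ε_g^{−2} + log₂( 5 [1 + 2 D_0/Δ_max] L_g Δ_0 ε_g^{−1} / (1−α) ) + 1. -/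
open scoped RealInnerProductSpace

/-!
While the gradient stays above `εg`, the Cauchy decrease bounds the model decrease below by
`(2εg/5) min(Δ_k, 4εg/(5Lg))`, and the descent lemma with the gradient-error and Hessian bounds
bounds the model error by `κ Lg Δ_k²`, where `κ = 1 + 2 D0/Δmax`. Hence every step with
`Δ_k ≤ 2 Δlow`, `Δlow = (1-α) εg/(5κLg)`, is successful, so the radius never falls below `Δlow`,
and each successful step decreases `f` by at least `α (2εg/5) Δlow`. Since `f` is bounded below,
this caps the number `S` of successful steps; since successful steps at most double the radius
and unsuccessful ones halve it, `Δlow 2^N ≤ Δ0 4^S` then caps the total number `N` of steps.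
-/

variable {E : Type*} [NormedAddCommGroup E] [InnerProductSpace ℝ E] [CompleteSpace E]

theorem sub_sub_inner_gradient_le {f : E → ℝ} {L : ℝ} (hf : Differentiable ℝ f)
    (hlip : ∀ y z, ‖gradient f y - gradient f z‖ ≤ L * ‖y - z‖) (x v : E) :
    f (x + v) - f x - ⟪gradient f x, v⟫ ≤ L / 2 * ‖v‖ ^ 2 := by
  set φ : ℝ → ℝ := fun t => f (x + t • v) - t * ⟪gradient f x, v⟫ - L / 2 * t ^ 2 * ‖v‖ ^ 2
  have hφ : ∀ t, HasDerivAt φ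
      (⟪gradient f (x + t • v) - gradient f x, v⟫ - L * t * ‖v‖ ^ 2) t := by
    intro t
    have hline : HasDerivAt (fun t : ℝ => x + t • v) v t := by
      simpa using ((hasDerivAt_id t).smul_const v).const_add x
    have := (((hf _).hasGradientAt.hasFDerivAt.comp_hasDerivAt t hline).sub
      ((hasDerivAt_id t).mul_const ⟪gradient f x, v⟫)).sub
      (((hasDerivAt_pow 2 t).const_mul (L / 2)).mul_const (‖v‖ ^ 2))
    refine this.congr_deriv ?_
    rw [InnerProductSpace.toDual_apply_apply, inner_sub_left]
    push_cast
    ring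
  have hanti : AntitoneOn φ (Set.Ici 0) := by
    refine antitoneOn_of_hasDerivWithinAt_nonpos (convex_Ici 0)
      (fun t _ => (hφ t).continuousAt.continuousWithinAt) (fun t _ => (hφ t).hasDerivWithinAt) ?_
    intro t ht
    rw [interior_Ici, Set.mem_Ioi] at ht
    have := real_inner_le_norm (gradient f (x + t • v) - gradient f x) v
    have := hlip (x + t • v) x
    rw [add_sub_cancel_left, norm_smul, Real.norm_of_nonneg ht.le] at this
    nlinarith [norm_nonneg v]
  have := hanti Set.self_mem_Ici (show (0:ℝ) ≤ 1 by norm_num) zero_le_one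
  simp only [φ, zero_smul, one_smul, add_zero] at this
  linarith

theorem model_error_le {f : E → ℝ} {L σ Δ : ℝ} {x g d : E} {B : E →L[ℝ] E}
    (hf : Differentiable ℝ f) (hlip : ∀ y z, ‖gradient f y - gradient f z‖ ≤ L * ‖y - z‖)
    (hB : ‖B‖ ≤ L) (hg : ‖g - gradient f x‖ ≤ σ * Δ) (hd : ‖d‖ ≤ Δ) :
    f (x + d) - (f x + ⟪g, d⟫ + 1 / 2 * ⟪B d, d⟫) ≤ (L + σ) * Δ ^ 2 := by
  have hd2 : ‖d‖ ^ 2 ≤ Δ ^ 2 := pow_le_pow_left₀ (norm_nonneg d) hd 2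
  have hL : 0 ≤ L := (norm_nonneg B).trans hB
  have hdescent := sub_sub_inner_gradient_le hf hlip x d
  have hgrad : ⟪gradient f x - g, d⟫ ≤ σ * Δ * Δ := by
    rw [← norm_sub_rev] at hg
    exact (real_inner_le_norm _ _).trans
      (mul_le_mul hg hd (norm_nonneg d) ((norm_nonneg _).trans hg))
  have hquad : -⟪B d, d⟫ ≤ L * Δ ^ 2 := by
    have := (abs_real_inner_le_norm (B d) d).trans
      (mul_le_mul_of_nonneg_right (B.le_opNorm d) (norm_nonneg d))
    nlinarith [neg_abs_le ⟪B d, d⟫, mul_le_mul_of_nonneg_left hB (sq_nonneg ‖d‖)]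
  rw [inner_sub_left] at hgrad
  nlinarith

structure IsTrustRegionStep (f : E → ℝ) (L εg D0 Δmax Δ : ℝ) (x g d : E) (B : E →L[ℝ] E)
    (m : E → ℝ) : Prop where
  norm_sub_gradient_le : ‖g - gradient f x‖ ≤ 2 * L * D0 * (Δ / Δmax)
  lt_norm : 4 * εg / 5 < ‖g‖
  norm_hessian_le : ‖B‖ ≤ L
  norm_step_le : ‖d‖ ≤ Δ
  cauchy_decrease : m 0 - m d ≥ 1 / 2 * ‖g‖ * min Δ (‖g‖ / L)
  model_eq : ∀ v, m v = f x + ⟪g, v⟫ + 1 / 2 * ⟪B v, v⟫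

namespace IsTrustRegionStep

variable {f : E → ℝ} {L εg D0 Δmax Δ α : ℝ} {x g d : E} {B : E →L[ℝ] E} {m : E → ℝ}

theorem model_decrease_ge (h : IsTrustRegionStep f L εg D0 Δmax Δ x g d B m) (hL : 0 < L)
    (hεg : 0 < εg) (hΔ : 0 < Δ) :
    2 * εg / 5 * min Δ (4 * εg / (5 * L)) ≤ m 0 - m d := by
  have hg := h.lt_norm
  refine le_trans ?_ h.cauchy_decrease
  refine mul_le_mul (by linarith) (min_le_min le_rfl ?_) (le_min hΔ.le (by positivity))
    (by positivity)
  rw [div_le_div_iff₀ (by positivity) hL]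
  nlinarith

theorem model_decrease_pos (h : IsTrustRegionStep f L εg D0 Δmax Δ x g d B m) (hL : 0 < L)
    (hεg : 0 < εg) (hΔ : 0 < Δ) : 0 < m 0 - m d :=
  (mul_pos (by positivity) (lt_min hΔ (by positivity))).trans_le (h.model_decrease_ge hL hεg hΔ)

theorem le_ratio_of_radius_le (h : IsTrustRegionStep f L εg D0 Δmax Δ x g d B m)
    (hf : Differentiable ℝ f) (hlip : ∀ y z, ‖gradient f y - gradient f z‖ ≤ L * ‖y - z‖)
    (hL : 0 < L) (hεg : 0 < εg) (hD0 : 0 ≤ D0) (hΔmax : 0 < Δmax) (hΔ : 0 < Δ)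
    (hα0 : 0 ≤ α) (hα1 : α ≤ 1)
    (hsmall : Δ ≤ 2 * ((1 - α) * εg / (5 * (1 + 2 * (D0 / Δmax)) * L))) :
    α ≤ (f x - f (x + d)) / (m 0 - m d) := by
  set κ := 1 + 2 * (D0 / Δmax)
  have hκ : 1 ≤ κ := by have := div_nonneg hD0 hΔmax.le; linarith
  have hsmall' : 5 * κ * L * Δ ≤ 2 * (1 - α) * εg := by
    rw [mul_div_assoc', le_div_iff₀ (by positivity)] at hsmall
    linarith
  have herr : f (x + d) - m d ≤ κ * L * Δ ^ 2 := by
    have := model_error_le (σ := 2 * L * D0 / Δmax) hf hlip h.norm_hessian_le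
      (by convert h.norm_sub_gradient_le using 1; ring) h.norm_step_le
    rw [h.model_eq d]
    convert this using 1
    ring
  have hpred : 2 * εg / 5 * Δ ≤ m 0 - m d := by
    have hΔR : Δ ≤ 4 * εg / (5 * L) := by
      rw [le_div_iff₀ (by positivity)]
      nlinarith
    simpa [min_eq_left hΔR] using h.model_decrease_ge hL hεg hΔ
  have hm0 : m 0 = f x := by simp [h.model_eq]
  rw [le_div_iff₀ (h.model_decrease_pos hL hεg hΔ)]
  nlinarith [mul_le_mul_of_nonneg_left hpred (by linarith : 0 ≤ 1 - α)]

theorem decrease_ge_of_le_ratio (h : IsTrustRegionStep f L εg D0 Δmax Δ x g d B m)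
    {Δlow : ℝ} (hL : 0 < L) (hεg : 0 < εg) (hΔ : 0 < Δ) (hα : 0 ≤ α)
    (hρ : α ≤ (f x - f (x + d)) / (m 0 - m d)) (hΔlow : Δlow ≤ Δ)
    (hΔlowR : Δlow ≤ 4 * εg / (5 * L)) :
    α * (2 * εg / 5) * Δlow ≤ f x - f (x + d) := by
  have hpred : 2 * εg / 5 * Δlow ≤ m 0 - m d :=
    (mul_le_mul_of_nonneg_left (le_min hΔlow hΔlowR) (by positivity)).trans
      (h.model_decrease_ge hL hεg hΔ)
  rw [le_div_iff₀ (h.model_decrease_pos hL hεg hΔ)] at hρ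
  nlinarith

end IsTrustRegionStep

section Counting

variable {Δ φ ρ : ℕ → ℝ} {N : ℕ} {α Δlow Δmax c : ℝ}

theorem le_radius_of_small_successful (hΔlow : 0 ≤ Δlow) (hΔ0 : Δlow ≤ Δ 0)
    (hΔ0max : Δ 0 ≤ Δmax)
    (hsmall : ∀ k < N, Δ k ≤ 2 * Δlow → α ≤ ρ k)
    (hsucc : ∀ k < N, α ≤ ρ k → Δ (k + 1) = min (2 * Δ k) Δmax)
    (hfail : ∀ k < N, ρ k < α → Δ (k + 1) = Δ k / 2) :
    ∀ k ≤ N, Δlow ≤ Δ k := by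
  intro k hk
  induction k with
  | zero => exact hΔ0
  | succ k ih =>
    have ih := ih (by omega)
    rcases le_or_gt α (ρ k) with hs | hs
    · rw [hsucc k hk hs]
      exact le_min (by linarith) (hΔ0.trans hΔ0max)
    · have : 2 * Δlow < Δ k := lt_of_not_ge fun h => (hsmall k hk h).not_gt hs
      rw [hfail k hk hs]
      linarith

theorem radius_mul_two_pow_le (hsucc : ∀ k < N, α ≤ ρ k → Δ (k + 1) ≤ 2 * Δ k)
    (hfail : ∀ k < N, ρ k < α → Δ (k + 1) = Δ k / 2) :
    Δ N * 2 ^ N ≤ Δ 0 * 4 ^ Nat.count (fun k => α ≤ ρ k) N := by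
  -- that is, Δ N ≤ Δ 0 * 2 ^ (S - F) with S successful and F = N - S unsuccessful steps
  induction N with
  | zero => simp
  | succ n ih =>
    have ih := ih (fun k hk => hsucc k (by omega)) (fun k hk => hfail k (by omega))
    rw [Nat.count_succ, pow_succ, pow_add]
    rcases le_or_gt α (ρ n) with hs | hs
    · rw [if_pos hs]
      nlinarith [hsucc n (by omega) hs, pow_pos (two_pos : (0 : ℝ) < 2) n]
    · rw [if_neg hs.not_ge, hfail n (by omega) hs]
      linarith

theorem count_mul_le_sub (hsucc : ∀ k < N, α ≤ ρ k → φ (k + 1) ≤ φ k - c)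
    (hfail : ∀ k < N, ρ k < α → φ (k + 1) = φ k) :
    Nat.count (fun k => α ≤ ρ k) N * c ≤ φ 0 - φ N := by
  induction N with
  | zero => simp
  | succ n ih =>
    have ih := ih (fun k hk => hsucc k (by omega)) (fun k hk => hfail k (by omega))
    rw [Nat.count_succ]
    rcases le_or_gt α (ρ n) with hs | hs
    · rw [if_pos hs]
      push_cast
      linarith [hsucc n (by omega) hs]
    · rw [if_neg hs.not_ge, hfail n (by omega) hs]
      simpa using ih

theorem iterations_le_of_radius_rule {flow : ℝ} (hc : 0 < c) (hΔlow : 0 < Δlow)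
    (hΔ0 : Δlow ≤ Δ 0) (hΔ0max : Δ 0 ≤ Δmax) (hlow : ∀ k, flow ≤ φ k)
    (hsmall : ∀ k < N, Δ k ≤ 2 * Δlow → α ≤ ρ k)
    (hsucc : ∀ k < N, α ≤ ρ k →
      Δ (k + 1) = min (2 * Δ k) Δmax ∧ (Δlow ≤ Δ k → φ (k + 1) ≤ φ k - c))
    (hfail : ∀ k < N, ρ k < α → Δ (k + 1) = Δ k / 2 ∧ φ (k + 1) = φ k) :
    (N : ℝ) ≤ 2 * ((φ 0 - flow) / c) + Real.logb 2 (Δ 0 / Δlow) := by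
  set S := Nat.count (fun k => α ≤ ρ k) N
  have hΔ := le_radius_of_small_successful hΔlow.le hΔ0 hΔ0max hsmall
    (fun k hk hs => (hsucc k hk hs).1) (fun k hk hs => (hfail k hk hs).1)
  have hS : S ≤ (φ 0 - flow) / c := by
    rw [le_div_iff₀ hc]
    have := count_mul_le_sub (fun k hk hs => (hsucc k hk hs).2 (hΔ k hk.le))
      (fun k hk hs => (hfail k hk hs).2)
    linarith [hlow N]
  have hpow : (2 : ℝ) ^ N ≤ Δ 0 / Δlow * 2 ^ (2 * S) := by
    rw [pow_mul, div_mul_eq_mul_div, le_div_iff₀ hΔlow, mul_comm,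
      show (2 : ℝ) ^ 2 = 4 by norm_num]
    exact (mul_le_mul_of_nonneg_right (hΔ N le_rfl) (by positivity)).trans
      (radius_mul_two_pow_le (fun k hk hs => (hsucc k hk hs).1 ▸ min_le_left _ _)
        (fun k hk hs => (hfail k hk hs).1))
  have hlog := Real.logb_le_logb_of_le one_lt_two (by positivity) hpow
  rw [Real.logb_mul (div_pos (hΔlow.trans_le hΔ0) hΔlow).ne' (by positivity), Real.logb_pow,
    Real.logb_pow, Real.logb_self_eq_one one_lt_two] at hlog
  push_cast at hlog
  linarith

end Counting

theorem nonempty_and_sInf_le_of_forall_not {P : ℕ → Prop} {b : ℝ}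
    (h : ∀ N, (∀ j < N, ¬ P j) → (N : ℝ) ≤ b) :
    {k | P k}.Nonempty ∧ ((sInf {k | P k} : ℕ) : ℝ) ≤ b := by
  have hne : {k | P k}.Nonempty := by
    by_contra hempty
    obtain ⟨N, hN⟩ := exists_nat_gt b
    exact (h N fun j _ hj => hempty ⟨j, hj⟩).not_gt hN
  exact ⟨hne, h _ fun j hj => Nat.notMem_of_lt_sInf hj⟩

theorem iterations_le_of_isTrustRegionStep {f : E → ℝ} {L flow α εg D0 Δmax : ℝ}
    {x d g : ℕ → E} {Δ : ℕ → ℝ} {B : ℕ → E →L[ℝ] E} {m : ℕ → E → ℝ} {N : ℕ}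
    (hf : Differentiable ℝ f) (hlip : ∀ y z, ‖gradient f y - gradient f z‖ ≤ L * ‖y - z‖)
    (hlow : ∀ y, flow ≤ f y) (hL : 0 < L) (hα0 : 0 < α) (hα1 : α < 1) (hεg : 0 < εg)
    (hD0 : 0 ≤ D0) (hΔpos : ∀ k, 0 < Δ k) (hΔ0max : Δ 0 ≤ Δmax)
    (hΔ0 : Δ 0 ≥ (1 - α) * εg / (5 * (1 + 2 * (D0 / Δmax)) * L))
    (hstep : ∀ k < N, IsTrustRegionStep f L εg D0 Δmax (Δ k) (x k) (g k) (d k) (B k) (m k) ∧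
      (α ≤ (f (x k) - f (x k + d k)) / (m k 0 - m k (d k)) →
          x (k + 1) = x k + d k ∧ Δ (k + 1) = min (2 * Δ k) Δmax) ∧
      ((f (x k) - f (x k + d k)) / (m k 0 - m k (d k)) < α →
          x (k + 1) = x k ∧ Δ (k + 1) = Δ k / 2)) :
    (N : ℝ) ≤ 25 * (1 + 2 * (D0 / Δmax)) * L * (f (x 0) - flow) / (α * (1 - α)) / εg ^ 2 +
      Real.logb 2 (5 * (1 + 2 * (D0 / Δmax)) * L * Δ 0 / ((1 - α) * εg)) := by
  have hΔmax : 0 < Δmax := (hΔpos 0).trans_le hΔ0max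
  set κ := 1 + 2 * (D0 / Δmax)
  have hκ : 1 ≤ κ := by have := div_nonneg hD0 hΔmax.le; linarith
  set Δlow := (1 - α) * εg / (5 * κ * L) with hΔlow_def
  have hΔlow : 0 < Δlow := div_pos (by nlinarith) (by positivity)
  have hΔlowR : Δlow ≤ 4 * εg / (5 * L) := by
    rw [div_le_div_iff₀ (by positivity) (by positivity)]
    nlinarith [mul_pos hεg hL]
  have hbound := iterations_le_of_radius_rule (φ := fun k => f (x k)) (α := α)
    (c := α * (2 * εg / 5) * Δlow) (by positivity) hΔlow hΔ0 hΔ0max (fun k => hlow (x k))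
    (fun k hk hsmall => (hstep k hk).1.le_ratio_of_radius_le hf hlip hL hεg hD0 hΔmax
      (hΔpos k) hα0.le hα1.le hsmall)
    (fun k hk hs => by
      obtain ⟨hx, hΔ⟩ := (hstep k hk).2.1 hs
      refine ⟨hΔ, fun hΔk => ?_⟩
      have := (hstep k hk).1.decrease_ge_of_le_ratio hL hεg (hΔpos k) hα0.le hs hΔk hΔlowR
      simp only [hx]
      linarith)
    (fun k hk hs => by
      obtain ⟨hx, hΔ⟩ := (hstep k hk).2.2 hs
      exact ⟨hΔ, by rw [hx]⟩)
  convert hbound using 2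
  · rw [hΔlow_def]
    field_simp [(by linarith : 1 - α ≠ 0), (by linarith : κ ≠ 0)]
    ring
  · rw [hΔlow_def]
    field_simp [(by linarith : 1 - α ≠ 0), (by linarith : κ ≠ 0)]

theorem stmt_11_general {n : ℕ} (f : EuclideanSpace ℝ (Fin n) → ℝ)
    (Lg flow : ℝ) (hLg : 0 < Lg)
    (hdiff : Differentiable ℝ f)
    (hlip : ∀ y z : EuclideanSpace ℝ (Fin n),
      ‖gradient f y - gradient f z‖ ≤ Lg * ‖y - z‖)
    (hlow : ∀ y, flow ≤ f y)
    (α εg D0 Δmax : ℝ) (hα0 : 0 < α) (hα1 : α < 1) (hεg : 0 < εg) (hD0 : 0 ≤ D0)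
    (x d g : ℕ → EuclideanSpace ℝ (Fin n)) (Δ : ℕ → ℝ)
    (B : ℕ → Matrix (Fin n) (Fin n) ℝ)
    (hΔpos : ∀ k, 0 < Δ k) (hΔ0max : Δ 0 ≤ Δmax)
    (hA5 : Δ 0 ≥ (1 - α) * εg / (5 * (1 + 2 * (D0 / Δmax)) * Lg))
    (m : ℕ → EuclideanSpace ℝ (Fin n) → ℝ)
    (hm : ∀ k v, m k v = f (x k) + ⟪g k, v⟫
      + (1 / 2) * ⟪(Matrix.toEuclideanCLM (𝕜 := ℝ) (B k)) v, v⟫)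
    (hyp : ∀ k, (∀ j ≤ k, εg < ‖gradient f (x j)‖) →
      (‖g k - gradient f (x k)‖ ≤ 2 * Lg * D0 * (Δ k / Δmax)) ∧
      (4 * εg / 5 < ‖g k‖) ∧
      (specNorm (B k) ≤ Lg) ∧
      (‖d k‖ ≤ Δ k) ∧
      (m k 0 - m k (d k) ≥ 1 / 2 * ‖g k‖ * min (Δ k) (‖g k‖ / Lg)) ∧
      ((α ≤ (f (x k) - f (x k + d k)) / (m k 0 - m k (d k)) →
          x (k + 1) = x k + d k ∧ Δ (k + 1) = min (2 * Δ k) Δmax) ∧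
        ((f (x k) - f (x k + d k)) / (m k 0 - m k (d k)) < α →
          x (k + 1) = x k ∧ Δ (k + 1) = Δ k / 2))) :
    {k : ℕ | ‖gradient f (x k)‖ ≤ εg}.Nonempty ∧
    ((sInf {k : ℕ | ‖gradient f (x k)‖ ≤ εg} : ℕ) : ℝ) ≤
      25 * (1 + 2 * (D0 / Δmax)) * Lg * (f (x 0) - flow) / (α * (1 - α)) / εg ^ 2 +
      Real.logb 2 (5 * (1 + 2 * (D0 / Δmax)) * Lg * Δ 0 / ((1 - α) * εg)) + 1 := by
  refine nonempty_and_sInf_le_of_forall_not fun N hN => ?_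
  have := iterations_le_of_isTrustRegionStep (B := fun k => Matrix.toEuclideanCLM (𝕜 := ℝ) (B k))
    (N := N) hdiff hlip hlow hLg hα0 hα1 hεg hD0 hΔpos hΔ0max hA5 fun k hk => by
      obtain ⟨h1, h2, h3, h4, h5, hupdate⟩ := hyp k fun j hj => lt_of_not_ge (hN j (by omega))
      exact ⟨⟨h1, h2, h3, h4, h5, hm k⟩, hupdate⟩
  linarith

theorem stmt_11 {n : ℕ} (f : EuclideanSpace ℝ (Fin n) → ℝ)
    (Lg flow : ℝ) (hLg : 0 < Lg)
    (hdiff : Differentiable ℝ f)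
    (hlip : ∀ y z : EuclideanSpace ℝ (Fin n),
      ‖gradient f y - gradient f z‖ ≤ Lg * ‖y - z‖)
    (hlow : ∀ y, flow ≤ f y)
    (α εg D0 Δmax : ℝ) (hα0 : 0 < α) (hα1 : α < 1) (hεg : 0 < εg) (hD0 : 0 ≤ D0)
    (x d g : ℕ → EuclideanSpace ℝ (Fin n)) (Δ : ℕ → ℝ)
    (B : ℕ → Matrix (Fin n) (Fin n) ℝ) (hBsymm : ∀ k, (B k).IsHermitian)
    (hΔpos : ∀ k, 0 < Δ k) (hΔ0max : Δ 0 ≤ Δmax)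
    (hA5 : Δ 0 ≥ (1 - α) * εg / (5 * (1 + 2 * (D0 / Δmax)) * Lg))
    (m : ℕ → EuclideanSpace ℝ (Fin n) → ℝ)
    (hm : ∀ k v, m k v = f (x k) + ⟪g k, v⟫
      + (1 / 2) * ⟪(Matrix.toEuclideanCLM (𝕜 := ℝ) (B k)) v, v⟫)
    (hyp : ∀ k, (∀ j ≤ k, εg < ‖gradient f (x j)‖) →
      (‖g k - gradient f (x k)‖ ≤ 2 * Lg * D0 * (Δ k / Δmax)) ∧
      (4 * εg / 5 < ‖g k‖) ∧
      (specNorm (B k) ≤ Lg) ∧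
      (‖d k‖ ≤ Δ k) ∧
      (m k 0 - m k (d k) ≥ 1 / 2 * ‖g k‖ * min (Δ k) (‖g k‖ / Lg)) ∧
      ((α ≤ (f (x k) - f (x k + d k)) / (m k 0 - m k (d k)) →
          x (k + 1) = x k + d k ∧ Δ (k + 1) = min (2 * Δ k) Δmax) ∧
        ((f (x k) - f (x k + d k)) / (m k 0 - m k (d k)) < α →
          x (k + 1) = x k ∧ Δ (k + 1) = Δ k / 2))) :
    {k : ℕ | ‖gradient f (x k)‖ ≤ εg}.Nonempty ∧
    ((sInf {k : ℕ | ‖gradient f (x k)‖ ≤ εg} : ℕ) : ℝ) ≤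
      25 * (1 + 2 * (D0 / Δmax)) * Lg * (f (x 0) - flow) / (α * (1 - α)) / εg ^ 2 +
      Real.logb 2 (5 * (1 + 2 * (D0 / Δmax)) * Lg * Δ 0 / ((1 - α) * εg)) + 1 :=
  stmt_11_general f Lg flow hLg hdiff hlip hlow α εg D0 Δmax hα0 hα1 hεg hD0 x d g Δ B hΔpos hΔ0max
    hA5 m hm hyp
end
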